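/- Let A be a weakly trivial skew brace. Then the group (A,+) is nilpotent if and only if the group (A,∘) is nilpotent, and in that case their nilpotency classes coincide and the skew brace A is both left nilpotent and right nilpotent. -/

import Mathlib

/-- A skew (left) brace: a type with two group structures `(A,+)` and `(A,∘)`
(the latter written multiplicatively) sharing the same identity, satisfying the
left skew brace law `a ∘ (b + c) = a ∘ b − a + a ∘ c`. -/
class SkewBrace (A : Type*) extends AddGroup A, Group A where
  mul_add_eq : ∀ a b c : A, a * (b + c) = a * b - a + a * c

namespace SkewBrace

variable {A : Type*}

/-- A skew brace is two-sided if `(a + b) ∘ c = a ∘ c − c + b ∘ c`. -/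
def IsTwoSided (A : Type*) [SkewBrace A] : Prop :=
  ∀ a b c : A, (a + b) * c = a * c - c + b * c

/-- `a * b = −a + a∘b − b`. -/
def bstar [SkewBrace A] (a b : A) : A := -a + a * b - b

/-- the star operation of the opposite skew brace: `a *ₒₚ b = −b + a∘b − a`. -/
def bstarOp [SkewBrace A] (a b : A) : A := -b + a * b - a

/-- `X * Y`: the additive subgroup generated by all `x * y`, `x ∈ X`, `y ∈ Y`. -/
def starSet [SkewBrace A] (X Y : Set A) : AddSubgroup A :=
  AddSubgroup.closure {z | ∃ x ∈ X, ∃ y ∈ Y, z = bstar x y}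

/-- `A² = A * A`. -/
def sq (A : Type*) [SkewBrace A] : AddSubgroup A := starSet Set.univ Set.univ

/-- `A²ₒₚ`, the additive subgroup generated by all `a *ₒₚ b`. -/
def sqOp (A : Type*) [SkewBrace A] : AddSubgroup A :=
  AddSubgroup.closure {z | ∃ a b : A, z = bstarOp a b}

/-- A skew brace is weakly trivial if `A² ∩ A²ₒₚ = {0}`. -/
def IsWeaklyTrivial (A : Type*) [SkewBrace A] : Prop := sq A ⊓ sqOp A = ⊥

/-- An ideal of a skew brace: an additive subgroup, normal in `(A,+)` and in
`(A,∘)`, and invariant under all `λ_a : b ↦ −a + a∘b`. -/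
structure IsIdeal [SkewBrace A] (I : AddSubgroup A) : Prop where
  add_conj : ∀ a : A, ∀ x ∈ I, a + x - a ∈ I
  mul_conj : ∀ a : A, ∀ x ∈ I, a * x * a⁻¹ ∈ I
  lambda_mem : ∀ a : A, ∀ x ∈ I, -a + a * x ∈ I

/-- The left series `A¹ = A`, `Aⁿ⁺¹ = A * Aⁿ`; `leftSeries A n` is `Aⁿ⁺¹`. -/
def leftSeries (A : Type*) [SkewBrace A] : ℕ → AddSubgroup A
  | 0 => ⊤
  | n + 1 => starSet Set.univ (leftSeries A n : Set A)

/-- The right series `A⁽¹⁾ = A`, `A⁽ⁿ⁺¹⁾ = A⁽ⁿ⁾ * A`; `rightSeries A n` is `A⁽ⁿ⁺¹⁾`. -/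
def rightSeries (A : Type*) [SkewBrace A] : ℕ → AddSubgroup A
  | 0 => ⊤
  | n + 1 => starSet (rightSeries A n : Set A) Set.univ

/-- A skew brace is left nilpotent if its left series reaches `{0}`. -/
def IsLeftNilpotent (A : Type*) [SkewBrace A] : Prop := ∃ n, leftSeries A n = ⊥

/-- A skew brace is right nilpotent if its right series reaches `{0}`. -/
def IsRightNilpotent (A : Type*) [SkewBrace A] : Prop := ∃ n, rightSeries A n = ⊥

/-- The series `A⁽¹⁾ = A`, `A^[n+1]` generated by the union of `A^[i] * A^[n+1-i]`;
`strongSeries A n` is `A^[n+1]`. -/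
def strongSeries (A : Type*) [SkewBrace A] : ℕ → AddSubgroup A
  | 0 => ⊤
  | n + 1 => ⨆ i : Fin (n + 1),
      starSet (strongSeries A i.val : Set A) (strongSeries A (n - i.val) : Set A)
  decreasing_by
  · exact i.isLt
  · have := i.isLt; omega

/-- A skew brace is strongly nilpotent if the series `A^[n]` reaches `{0}`. -/
def IsStronglyNilpotent (A : Type*) [SkewBrace A] : Prop := ∃ n, strongSeries A n = ⊥

/-- The derived series of a skew brace: `A₁ = A`, `Aₙ₊₁ = Aₙ * Aₙ`;
`derivedSeriesBrace A n` is `Aₙ₊₁`. -/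
def derivedSeriesBrace (A : Type*) [SkewBrace A] : ℕ → AddSubgroup A
  | 0 => ⊤
  | n + 1 => starSet (derivedSeriesBrace A n : Set A) (derivedSeriesBrace A n : Set A)

/-- A skew brace is soluble if its derived series reaches `{0}`. -/
def IsSolubleBrace (A : Type*) [SkewBrace A] : Prop := ∃ n, derivedSeriesBrace A n = ⊥

end SkewBrace

namespace SkewBrace

variable {A : Type*} [SkewBrace A]

theorem mul_zero_eq (a : A) : a * (0 : A) = a := by
  have h := SkewBrace.mul_add_eq a 0 0
  rw [add_zero] at h
  have h' : (0 : A) + a * 0 = a * 0 - a + a * 0 := by rw [zero_add]; exact h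
  exact sub_eq_zero.mp (add_right_cancel h').symm

theorem one_eq_zero : (1 : A) = 0 := by
  have h := mul_zero_eq (1 : A)
  rw [one_mul] at h
  exact h.symm

theorem expand1 (a b : A) : a + bstar a b + b = a * b := by
  simp [bstar, sub_eq_add_neg, add_assoc]

theorem expand2 (a b : A) : b + bstarOp a b + a = a * b := by
  simp [bstarOp, sub_eq_add_neg, add_assoc]

theorem bstar_mem_sq (a b : A) : bstar a b ∈ sq A :=
  AddSubgroup.subset_closure ⟨a, trivial, b, trivial, rfl⟩

theorem bstarOp_mem_sqOp (a b : A) : bstarOp a b ∈ sqOp A :=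
  AddSubgroup.subset_closure ⟨a, b, rfl⟩

theorem conj_bstar (a g c : A) :
    g + bstar a c + -g = -(bstar a g) + bstar a (g + c) := by
  simp only [bstar, SkewBrace.mul_add_eq, sub_eq_add_neg, neg_add_rev, neg_neg]
  simp [add_assoc]

theorem conj_bstarOp (a g c : A) :
    g + bstarOp a c + -g = bstarOp a (c + -g) + -(bstarOp a (-g)) := by
  simp only [bstarOp, SkewBrace.mul_add_eq, sub_eq_add_neg, neg_add_rev, neg_neg]
  simp [add_assoc]

instance sq_normal : (sq A).Normal := by
  constructor
  intro n hn g
  induction hn using AddSubgroup.closure_induction with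
  | mem y hy =>
    obtain ⟨a, -, c, -, rfl⟩ := hy
    rw [conj_bstar]
    exact add_mem (neg_mem (bstar_mem_sq a g)) (bstar_mem_sq a (g + c))
  | zero => simpa using zero_mem (sq A)
  | add p q hp hq hp' hq' =>
    have e : g + (p + q) + -g = (g + p + -g) + (g + q + -g) := by
      simp [add_assoc]
    rw [e]; exact add_mem hp' hq'
  | neg p hp hp' =>
    have e : g + -p + -g = -(g + p + -g) := by
      simp [neg_add_rev, add_assoc]
    rw [e]; exact neg_mem hp'

instance sqOp_normal : (sqOp A).Normal := by
  constructor
  intro n hn g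
  induction hn using AddSubgroup.closure_induction with
  | mem y hy =>
    obtain ⟨a, c, rfl⟩ := hy
    rw [conj_bstarOp]
    exact add_mem (bstarOp_mem_sqOp a (c + -g)) (neg_mem (bstarOp_mem_sqOp a (-g)))
  | zero => simpa using zero_mem (sqOp A)
  | add p q hp hq hp' hq' =>
    have e : g + (p + q) + -g = (g + p + -g) + (g + q + -g) := by
      simp [add_assoc]
    rw [e]; exact add_mem hp' hq'
  | neg p hp hp' =>
    have e : g + -p + -g = -(g + p + -g) := by
      simp [neg_add_rev, add_assoc]
    rw [e]; exact neg_mem hp'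

theorem mk_sq_mul (a b : A) :
    ((a * b : A) : A ⧸ sq A) = (a : A ⧸ sq A) + (b : A ⧸ sq A) := by
  rw [← QuotientAddGroup.mk_add]
  rw [QuotientAddGroup.eq_iff_sub_mem]
  have e : a * b - (a + b) = a + bstar a b + -a := by
    rw [← expand1]; simp [sub_eq_add_neg, neg_add_rev, add_assoc]
  rw [e]
  exact AddSubgroup.Normal.conj_mem inferInstance _ (bstar_mem_sq a b) a

theorem mk_sqOp_mul (a b : A) :
    ((a * b : A) : A ⧸ sqOp A) = (b : A ⧸ sqOp A) + (a : A ⧸ sqOp A) := by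
  rw [← QuotientAddGroup.mk_add]
  rw [QuotientAddGroup.eq_iff_sub_mem]
  have e : a * b - (b + a) = b + bstarOp a b + -b := by
    rw [← expand2]; simp [sub_eq_add_neg, neg_add_rev, add_assoc]
  rw [e]
  exact AddSubgroup.Normal.conj_mem inferInstance _ (bstarOp_mem_sqOp a b) b

/-- The canonical multiplicative hom `(A,∘) → (A/A², +)`. -/
def f1 (A : Type*) [SkewBrace A] : A →* Multiplicative (A ⧸ sq A) :=
  MonoidHom.mk' (fun a => Multiplicative.ofAdd ((a : A) : A ⧸ sq A)) (by
    intro a b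
    simp [mk_sq_mul])

/-- The canonical multiplicative hom `(A,∘) → (A/A²ₒₚ, +)`, `a ↦ -ā`. -/
def f2 (A : Type*) [SkewBrace A] : A →* Multiplicative (A ⧸ sqOp A) :=
  MonoidHom.mk' (fun a => Multiplicative.ofAdd (-((a : A) : A ⧸ sqOp A))) (by
    intro a b
    simp [mk_sqOp_mul, neg_add_rev])

/-- The canonical hom `(A,+) → (A/A², +)`. -/
def g1 (A : Type*) [SkewBrace A] : Multiplicative A →* Multiplicative (A ⧸ sq A) :=
  MonoidHom.mk' (fun a => Multiplicative.ofAdd ((a.toAdd : A ⧸ sq A))) (by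
    intro a b
    simp [QuotientAddGroup.mk_add])

/-- The canonical hom `(A,+) → (A/A²ₒₚ, +)`. -/
def g2 (A : Type*) [SkewBrace A] : Multiplicative A →* Multiplicative (A ⧸ sqOp A) :=
  MonoidHom.mk' (fun a => Multiplicative.ofAdd ((a.toAdd : A ⧸ sqOp A))) (by
    intro a b
    simp [QuotientAddGroup.mk_add])

theorem f1_surjective : Function.Surjective (f1 A) := by
  intro y
  obtain ⟨a, ha⟩ := QuotientAddGroup.mk_surjective (Multiplicative.toAdd y)
  exact ⟨a, by simp [f1, ha]⟩

theorem f2_surjective : Function.Surjective (f2 A) := by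
  intro y
  obtain ⟨a, ha⟩ := QuotientAddGroup.mk_surjective (-(Multiplicative.toAdd y))
  exact ⟨a, by simp [f2, ha]⟩

theorem g1_surjective : Function.Surjective (g1 A) := by
  intro y
  obtain ⟨a, ha⟩ := QuotientAddGroup.mk_surjective (Multiplicative.toAdd y)
  exact ⟨Multiplicative.ofAdd a, by show Multiplicative.ofAdd ((a : A ⧸ sq A)) = y; rw [ha]; rfl⟩

theorem g2_surjective : Function.Surjective (g2 A) := by
  intro y
  obtain ⟨a, ha⟩ := QuotientAddGroup.mk_surjective (Multiplicative.toAdd y)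
  exact ⟨Multiplicative.ofAdd a, by show Multiplicative.ofAdd ((a : A ⧸ sqOp A)) = y; rw [ha]; rfl⟩

theorem map_lcs {G H : Type*} [Group G] [Group H] (f : G →* H)
    (hf : Function.Surjective f) : ∀ n, ((⊤ : Subgroup (G)).lowerCentralSeries n).map f = (⊤ : Subgroup (H)).lowerCentralSeries n := by
  intro n
  induction n with
  | zero => exact Subgroup.map_top_of_surjective f hf
  | succ n ih =>
    show ((⁅(⊤ : Subgroup (G)).lowerCentralSeries n, (⊤ : Subgroup G)⁆).map f) = ⁅(⊤ : Subgroup (H)).lowerCentralSeries n, ⊤⁆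
    rw [Subgroup.map_commutator, ih, Subgroup.map_top_of_surjective f hf]

theorem both_zero (h : IsWeaklyTrivial A) {x : A} (h1 : ((x : A) : A ⧸ sq A) = 0)
    (h2 : ((x : A) : A ⧸ sqOp A) = 0) : x = 0 := by
  have m1 : x ∈ sq A := (QuotientAddGroup.eq_zero_iff x).mp h1
  have m2 : x ∈ sqOp A := (QuotientAddGroup.eq_zero_iff x).mp h2
  have hm : x ∈ sq A ⊓ sqOp A := ⟨m1, m2⟩
  rw [h] at hm
  exact hm

theorem lcs_iff (h : IsWeaklyTrivial A) (n : ℕ) :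
    (⊤ : Subgroup (Multiplicative A)).lowerCentralSeries n = ⊥ ↔ (⊤ : Subgroup (A)).lowerCentralSeries n = ⊥ := by
  constructor
  · intro hn
    have e1 : (⊤ : Subgroup (Multiplicative (A ⧸ sq A))).lowerCentralSeries n = ⊥ := by
      rw [← map_lcs (g1 A) g1_surjective n, hn, Subgroup.map_bot]
    have e2 : (⊤ : Subgroup (Multiplicative (A ⧸ sqOp A))).lowerCentralSeries n = ⊥ := by
      rw [← map_lcs (g2 A) g2_surjective n, hn, Subgroup.map_bot]
    rw [eq_bot_iff]
    intro x hx
    have h1 : f1 A x ∈ (⊤ : Subgroup (Multiplicative (A ⧸ sq A))).lowerCentralSeries n := by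
      rw [← map_lcs (f1 A) f1_surjective n]; exact ⟨x, hx, rfl⟩
    have h2 : f2 A x ∈ (⊤ : Subgroup (Multiplicative (A ⧸ sqOp A))).lowerCentralSeries n := by
      rw [← map_lcs (f2 A) f2_surjective n]; exact ⟨x, hx, rfl⟩
    rw [e1, Subgroup.mem_bot] at h1
    rw [e2, Subgroup.mem_bot] at h2
    have z1 : ((x : A) : A ⧸ sq A) = 0 := by
      have := congrArg Multiplicative.toAdd h1
      simpa [f1] using this
    have z2 : ((x : A) : A ⧸ sqOp A) = 0 := by
      have := congrArg Multiplicative.toAdd h2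
      simpa [f2, neg_eq_zero] using this
    have := both_zero h z1 z2
    rw [Subgroup.mem_bot, one_eq_zero]
    exact this
  · intro hn
    have e1 : (⊤ : Subgroup (Multiplicative (A ⧸ sq A))).lowerCentralSeries n = ⊥ := by
      rw [← map_lcs (f1 A) f1_surjective n, hn, Subgroup.map_bot]
    have e2 : (⊤ : Subgroup (Multiplicative (A ⧸ sqOp A))).lowerCentralSeries n = ⊥ := by
      rw [← map_lcs (f2 A) f2_surjective n, hn, Subgroup.map_bot]
    rw [eq_bot_iff]
    intro x hx
    have h1 : g1 A x ∈ (⊤ : Subgroup (Multiplicative (A ⧸ sq A))).lowerCentralSeries n := by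
      rw [← map_lcs (g1 A) g1_surjective n]; exact ⟨x, hx, rfl⟩
    have h2 : g2 A x ∈ (⊤ : Subgroup (Multiplicative (A ⧸ sqOp A))).lowerCentralSeries n := by
      rw [← map_lcs (g2 A) g2_surjective n]; exact ⟨x, hx, rfl⟩
    rw [e1, Subgroup.mem_bot] at h1
    rw [e2, Subgroup.mem_bot] at h2
    have z1 : ((x.toAdd : A) : A ⧸ sq A) = 0 := by
      have := congrArg Multiplicative.toAdd h1
      exact this
    have z2 : ((x.toAdd : A) : A ⧸ sqOp A) = 0 := by
      have := congrArg Multiplicative.toAdd h2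
      exact this
    have hz := both_zero h z1 z2
    rw [Subgroup.mem_bot]
    exact Multiplicative.toAdd.injective (by simpa using hz)

theorem starSet_le_sq (X Y : Set A) : starSet X Y ≤ sq A :=
  AddSubgroup.closure_mono (by
    rintro z ⟨x, -, y, -, rfl⟩
    exact ⟨x, trivial, y, trivial, rfl⟩)

theorem mk_sqOp_bstar (a b : A) :
    ((bstar a b : A) : A ⧸ sqOp A)
      = -((a : A) : A ⧸ sqOp A) + ((b : A) : A ⧸ sqOp A)
        + ((a : A) : A ⧸ sqOp A) + -((b : A) : A ⧸ sqOp A) := by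
  have e : bstar a b = -a + (b + (bstarOp a b + (a + -b))) := by
    rw [bstar, ← expand2]; simp [sub_eq_add_neg, add_assoc]
  rw [e]
  simp [QuotientAddGroup.mk_add, QuotientAddGroup.mk_neg,
    (QuotientAddGroup.eq_zero_iff _).mpr (bstarOp_mem_sqOp a b), add_assoc]

open scoped commutatorElement in
theorem ofAdd_mk_sqOp_bstar (a b : A) :
    Multiplicative.ofAdd ((bstar a b : A) : A ⧸ sqOp A)
      = ⁅(Multiplicative.ofAdd ((a : A) : A ⧸ sqOp A))⁻¹,
          Multiplicative.ofAdd ((b : A) : A ⧸ sqOp A)⁆ := by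
  rw [mk_sqOp_bstar]
  simp [commutatorElement_def, mul_assoc]

theorem leftSeries_mk_mem (n : ℕ) :
    ∀ x ∈ leftSeries A n, Multiplicative.ofAdd ((x : A) : A ⧸ sqOp A) ∈
      (⊤ : Subgroup (Multiplicative (A ⧸ sqOp A))).lowerCentralSeries n := by
  induction n with
  | zero => intro x _; exact Subgroup.mem_top _
  | succ n ih =>
    intro x hx
    induction hx using AddSubgroup.closure_induction with
    | mem z hz =>
      obtain ⟨a, -, y, hy, rfl⟩ := hz
      rw [ofAdd_mk_sqOp_bstar]
      rw [show (⊤ : Subgroup (Multiplicative (A ⧸ sqOp A))).lowerCentralSeries (n + 1)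
            = ⁅(⊤ : Subgroup (Multiplicative (A ⧸ sqOp A))).lowerCentralSeries n, ⊤⁆ from rfl,
          Subgroup.commutator_comm]
      exact Subgroup.commutator_mem_commutator (Subgroup.mem_top _) (ih y hy)
    | zero => simpa using Subgroup.one_mem _
    | add p q hp hq hp' hq' =>
      rw [QuotientAddGroup.mk_add, ofAdd_add]
      exact mul_mem hp' hq'
    | neg p hp hp' =>
      rw [QuotientAddGroup.mk_neg, ofAdd_neg]
      exact inv_mem hp'

theorem rightSeries_mk_mem (n : ℕ) :
    ∀ x ∈ rightSeries A n, Multiplicative.ofAdd ((x : A) : A ⧸ sqOp A) ∈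
      (⊤ : Subgroup (Multiplicative (A ⧸ sqOp A))).lowerCentralSeries n := by
  induction n with
  | zero => intro x _; exact Subgroup.mem_top _
  | succ n ih =>
    intro x hx
    induction hx using AddSubgroup.closure_induction with
    | mem z hz =>
      obtain ⟨y, hy, a, -, rfl⟩ := hz
      rw [ofAdd_mk_sqOp_bstar]
      exact Subgroup.commutator_mem_commutator (inv_mem (ih y hy)) (Subgroup.mem_top _)
    | zero => simpa using Subgroup.one_mem _
    | add p q hp hq hp' hq' =>
      rw [QuotientAddGroup.mk_add, ofAdd_add]
      exact mul_mem hp' hq'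
    | neg p hp hp' =>
      rw [QuotientAddGroup.mk_neg, ofAdd_neg]
      exact inv_mem hp'

theorem left_nilpotent_of (h : IsWeaklyTrivial A) {c : ℕ}
    (hc : (⊤ : Subgroup (Multiplicative (A ⧸ sqOp A))).lowerCentralSeries c = ⊥) :
    leftSeries A (c + 1) = ⊥ := by
  rw [eq_bot_iff]
  intro x hx
  have hsq : x ∈ sq A := starSet_le_sq _ _ hx
  have h2 := leftSeries_mk_mem (c + 1) x hx
  have h3 : Multiplicative.ofAdd ((x : A) : A ⧸ sqOp A) ∈
      (⊤ : Subgroup (Multiplicative (A ⧸ sqOp A))).lowerCentralSeries c :=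
    Subgroup.lowerCentralSeries_antitone _ (Nat.le_succ c) h2
  rw [hc, Subgroup.mem_bot] at h3
  have z2 : ((x : A) : A ⧸ sqOp A) = 0 := by
    have := congrArg Multiplicative.toAdd h3
    simpa using this
  have m2 : x ∈ sqOp A := (QuotientAddGroup.eq_zero_iff x).mp z2
  have hm : x ∈ sq A ⊓ sqOp A := ⟨hsq, m2⟩
  rw [h] at hm
  exact hm

theorem right_nilpotent_of (h : IsWeaklyTrivial A) {c : ℕ}
    (hc : (⊤ : Subgroup (Multiplicative (A ⧸ sqOp A))).lowerCentralSeries c = ⊥) :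
    rightSeries A (c + 1) = ⊥ := by
  rw [eq_bot_iff]
  intro x hx
  have hsq : x ∈ sq A := starSet_le_sq _ _ hx
  have h2 := rightSeries_mk_mem (c + 1) x hx
  have h3 : Multiplicative.ofAdd ((x : A) : A ⧸ sqOp A) ∈
      (⊤ : Subgroup (Multiplicative (A ⧸ sqOp A))).lowerCentralSeries c :=
    Subgroup.lowerCentralSeries_antitone _ (Nat.le_succ c) h2
  rw [hc, Subgroup.mem_bot] at h3
  have z2 : ((x : A) : A ⧸ sqOp A) = 0 := by
    have := congrArg Multiplicative.toAdd h3
    simpa using this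
  have m2 : x ∈ sqOp A := (QuotientAddGroup.eq_zero_iff x).mp z2
  have hm : x ∈ sq A ⊓ sqOp A := ⟨hsq, m2⟩
  rw [h] at hm
  exact hm

end SkewBrace

open SkewBrace in
/-- For a weakly trivial skew brace, `(A,+)` is nilpotent iff `(A,∘)` is nilpotent; in
that case their nilpotency classes coincide (the lower central series reach `⊥` at the
same indices) and `A` is both left and right nilpotent. -/
theorem isWeaklyTrivial_nilpotent_iff (A : Type*) [SkewBrace A] (h : IsWeaklyTrivial A) :
    (Group.IsNilpotent (Multiplicative A) ↔ Group.IsNilpotent A) ∧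
    (Group.IsNilpotent A →
      (∀ n, (⊤ : Subgroup (Multiplicative A)).lowerCentralSeries n = ⊥ ↔
        (⊤ : Subgroup A).lowerCentralSeries n = ⊥) ∧
      IsLeftNilpotent A ∧ IsRightNilpotent A) := by
  constructor
  · rw [nilpotent_iff_lowerCentralSeries, nilpotent_iff_lowerCentralSeries]
    exact exists_congr fun n => lcs_iff h n
  · intro hnil
    refine ⟨fun n => lcs_iff h n, ?_, ?_⟩
    · obtain ⟨m, hm⟩ := nilpotent_iff_lowerCentralSeries.mp hnil
      have hc : (⊤ : Subgroup (Multiplicative (A ⧸ sqOp A))).lowerCentralSeries m = ⊥ := by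
        rw [← map_lcs (f2 A) f2_surjective m, hm, Subgroup.map_bot]
      exact ⟨m + 1, left_nilpotent_of h hc⟩
    · obtain ⟨m, hm⟩ := nilpotent_iff_lowerCentralSeries.mp hnil
      have hc : (⊤ : Subgroup (Multiplicative (A ⧸ sqOp A))).lowerCentralSeries m = ⊥ := by
        rw [← map_lcs (f2 A) f2_surjective m, hm, Subgroup.map_bot]
      exact ⟨m + 1, right_nilpotent_of h hc⟩
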